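/- arXiv:2212.03565 — 3 statements merged into one kernel-verified Lean document; each statement's English description precedes it below -/
import Mathlib

section
/- Let U be a consistent recursively enumerable theory. Then U is essentially hereditarily undecidable if and only if, for every set W of sentences in the language of U such that U ∪ W is consistent, the theory axiomatized by W is undecidable. -/
/-!
If `U` is essentially hereditarily undecidable and `W` is decidable with `U ∪ W` consistent, then
`U ∪ W` is a consistent r.e. extension of `U` with the decidable consistent sub-theory `W`, which
is absurd. The point is that `U ∪ W` is r.e.: `U ∪ W ⊨ φ` iff `W ⊨ ψ ⟹ φ` for some theorem `ψ`
of `U`, the code of `ψ ⟹ φ` is a computable function of the codes of `ψ` and `φ`, and by unique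
readability of the encoding of formulas a code of this shape determines `φ`. Conversely, a
decidable consistent sub-theory `W` of a consistent extension `V` of `U` makes `U ∪ W` consistent,
since `V` extends `U ∪ W`.
-/

open FirstOrder Language

namespace Formalization

/-- An `Encodable` instance for bounded formulas, derived from Mathlib's encoding. -/
def sigmaBFEncodable (L : Language) (α : Type*) [Encodable α]
    [∀ n, Encodable (L.Functions n)] [∀ n, Encodable (L.Relations n)] :
    Encodable (Σ n, L.BoundedFormula α n) :=
  haveI : Encodable (Σ i, L.Functions i) := Sigma.encodable
  haveI : Encodable (Σ i, L.Relations i) := Sigma.encodable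
  Encodable.ofLeftInjection
    (fun φ => φ.2.listEncode)
    (fun l => (BoundedFormula.listDecode l)[0]?)
    (fun φ => BoundedFormula.encoding.decode_encode φ)

instance sentenceEncodable (L : Language)
    [∀ n, Encodable (L.Functions n)] [∀ n, Encodable (L.Relations n)] :
    Encodable L.Sentence :=
  haveI := sigmaBFEncodable L Empty
  Encodable.ofLeftInjection
    (fun φ => (⟨0, φ⟩ : Σ n, L.BoundedFormula Empty n))
    (fun p => match p with
      | ⟨0, φ⟩ => some φ
      | ⟨_ + 1, _⟩ => none)
    (fun _ => rfl)

section TheoryNotions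

variable {L : Language} [∀ n, Encodable (L.Functions n)] [∀ n, Encodable (L.Relations n)]

/-- The set of Gödel codes of theorems of a theory. -/
def TheoremSet (T : L.Theory) : Set ℕ :=
  {n | ∃ φ : L.Sentence, Encodable.encode φ = n ∧ T ⊨ᵇ φ}

/-- The set of Gödel codes of sentences refuted by a theory. -/
def RefutableSet (T : L.Theory) : Set ℕ :=
  {n | ∃ φ : L.Sentence, Encodable.encode φ = n ∧ T ⊨ᵇ ∼φ}

/-- A theory is recursively enumerable if its set of theorem-codes is r.e. -/
def IsRE (T : L.Theory) : Prop := REPred (· ∈ TheoremSet T)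

/-- A theory is decidable if its set of theorem-codes is computable. -/
def IsDecidableTheory (T : L.Theory) : Prop := ComputablePred (· ∈ TheoremSet T)

/-- A theory is consistent if it does not prove `⊥`. -/
def Consistent (T : L.Theory) : Prop := ¬ T ⊨ᵇ (⊥ : L.Sentence)

/-- `Extends T T'` : `T'` is an extension of `T` in the same language,
i.e. every theorem of `T` is a theorem of `T'`. -/
def Extends (T T' : L.Theory) : Prop := ∀ φ : L.Sentence, T ⊨ᵇ φ → T' ⊨ᵇ φ

/-- A theory is complete if it decides every sentence. -/
def IsCompleteTheory (T : L.Theory) : Prop := ∀ φ : L.Sentence, T ⊨ᵇ φ ∨ T ⊨ᵇ ∼φ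

/-- Hereditarily undecidable: every consistent r.e. sub-theory (in the same language)
is undecidable. -/
def HeredUndecidable (T : L.Theory) : Prop :=
  ∀ W : L.Theory, IsRE W → Consistent W → Extends W T → ¬ IsDecidableTheory W

/-- Essentially undecidable: every consistent r.e. extension (in the same language)
is undecidable. -/
def EssUndecidable (T : L.Theory) : Prop :=
  ∀ W : L.Theory, IsRE W → Consistent W → Extends T W → ¬ IsDecidableTheory W

/-- Essentially hereditarily undecidable: every consistent r.e. extension (in the same
language) is hereditarily undecidable. -/
def EssHeredUndecidable (T : L.Theory) : Prop :=
  ∀ W : L.Theory, IsRE W → Consistent W → Extends T W → HeredUndecidable W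

end TheoryNotions

end Formalization

namespace Formalization

section Encoding

open BoundedFormula in
theorem _root_.FirstOrder.Language.BoundedFormula.listEncode_append_inj {L : Language}
    {α : Type*} {n n' : ℕ} (φ : L.BoundedFormula α n) (ψ : L.BoundedFormula α n') {l l'}
    (h : φ.listEncode ++ l = ψ.listEncode ++ l') :
    (⟨n, φ⟩ : Σ n, L.BoundedFormula α n) = ⟨n', ψ⟩ ∧ l = l' := by
  induction φ generalizing n' l l' with
  | falsum =>
    cases ψ <;> simp [listEncode] at h
    obtain ⟨rfl, rfl⟩ := h
    simp
  | equal t₁ t₂ =>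
    cases ψ <;> simp [listEncode] at h
    obtain ⟨⟨rfl, h₁⟩, ⟨-, h₂⟩, rfl⟩ := h
    simp_all
  | rel R ts =>
    cases ψ with simp [listEncode] at h
    | rel R' ts' =>
      obtain ⟨⟨rfl, hR⟩, rfl, h⟩ := h
      obtain ⟨hts, rfl⟩ := List.append_inj h (by simp)
      refine ⟨?_, rfl⟩
      have : ts = ts' := funext fun i => by simpa using congr($hts[i])
      simp_all
  | imp φ₁ φ₂ ih₁ ih₂ =>
    cases ψ with simp [listEncode] at h
    | imp ψ₁ ψ₂ =>
      obtain ⟨h₁, h⟩ := ih₁ ψ₁ h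
      obtain ⟨h₂, rfl⟩ := ih₂ ψ₂ h
      obtain ⟨rfl, h₁⟩ := Sigma.mk.inj_iff.1 h₁
      cases eq_of_heq h₁
      cases eq_of_heq (Sigma.mk.inj_iff.1 h₂).2
      exact ⟨rfl, rfl⟩
  | all φ ih =>
    cases ψ with simp [listEncode] at h
    | all ψ =>
      obtain ⟨hφ, rfl⟩ := ih ψ h
      obtain ⟨hn, hφ⟩ := Sigma.mk.inj_iff.1 hφ
      cases Nat.succ_injective hn
      cases eq_of_heq hφ
      exact ⟨rfl, rfl⟩

open Encodable

variable {L : Language} [∀ n, Encodable (L.Functions n)] [∀ n, Encodable (L.Relations n)]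

lemma encode_list_eq_encode_map {β : Type*} [Encodable β] (l : List β) :
    encode l = encode (l.map encode) := by
  induction l with
  | nil => rfl
  | cons a l ih => simp [encode_list_cons, ih]

lemma encode_sentence_eq (φ : L.Sentence) :
    encode φ = encode (φ.listEncode.map encode) :=
  encode_list_eq_encode_map φ.listEncode

variable (L) in
/-- `Sum.inr (Sum.inr 0)` is the symbol with which `BoundedFormula.listEncode` starts an
implication. On numbers that are not codes of sentences the value is junk. -/
def impCode (m n : ℕ) : ℕ :=
  encode <|
    encode (Sum.inr (Sum.inr 0) : (Σ k, L.Term (Empty ⊕ Fin k)) ⊕ ((Σ n, L.Relations n) ⊕ ℕ)) ::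
      (Denumerable.ofNat (List ℕ) m ++ Denumerable.ofNat (List ℕ) n)

variable (L) in
lemma primrec_impCode : Primrec₂ (impCode L) :=
  Primrec.encode.comp (Primrec.list_cons.comp (Primrec.const _)
    (Primrec.list_append.comp ((Primrec.ofNat (List ℕ)).comp Primrec.fst)
      ((Primrec.ofNat (List ℕ)).comp Primrec.snd)))

lemma impCode_encode (ψ φ : L.Sentence) : impCode L (encode ψ) (encode φ) = encode (ψ ⟹ φ) := by
  simp [impCode, encode_sentence_eq, BoundedFormula.listEncode]

lemma exists_eq_imp_of_encode_eq_impCode {χ ψ : L.Sentence} {n : ℕ}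
    (h : encode χ = impCode L (encode ψ) n) : ∃ φ, χ = ψ ⟹ φ ∧ encode φ = n := by
  rw [encode_sentence_eq, impCode, encode_sentence_eq, Denumerable.ofNat_encode] at h
  obtain ⟨s, l, hχ, hs, hl⟩ := List.map_eq_cons_iff.1 (encode_injective h)
  obtain ⟨l₁, l₂, rfl, hl₁, hl₂⟩ := List.map_eq_append_iff.1 hl
  cases encode_injective hs
  cases List.map_injective_iff.2 encode_injective hl₁
  cases χ with simp [BoundedFormula.listEncode] at hχ
  | imp χ₁ χ₂ =>
    obtain ⟨hψ, rfl⟩ := BoundedFormula.listEncode_append_inj χ₁ ψ hχ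
    cases eq_of_heq (Sigma.mk.inj_iff.1 hψ).2
    refine ⟨χ₂, rfl, ?_⟩
    rw [encode_sentence_eq, hl₂, Denumerable.encode_ofNat]

end Encoding

section Semantics

variable {L : Language}

lemma extends_of_subset {T T' : L.Theory} (h : T ⊆ T') : Extends T T' :=
  fun _ => Theory.models_of_models_theory fun _ hψ => Theory.models_sentence_of_mem (h hψ)

lemma union_extends {U W V : L.Theory} (hU : Extends U V) (hW : Extends W V) :
    Extends (U ∪ W) V :=
  fun _ => Theory.models_of_models_theory fun _ hψ =>
    hψ.elim (fun h => hU _ (Theory.models_sentence_of_mem h))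
      (fun h => hW _ (Theory.models_sentence_of_mem h))

lemma Consistent.of_extends {T T' : L.Theory} (h : Extends T T') (hT' : Consistent T') :
    Consistent T :=
  fun hT => hT' (h _ hT)

lemma union_models_iff {U W : L.Theory} {φ : L.Sentence} :
    (U ∪ W) ⊨ᵇ φ ↔ ∃ ψ : L.Sentence, U ⊨ᵇ ψ ∧ W ⊨ᵇ (ψ ⟹ φ) := by
  classical
  constructor
  · intro h
    obtain ⟨T₀, hT₀, hφ⟩ := Theory.models_iff_finset_models.1 h
    refine ⟨Formula.iInf fun ψ : T₀.filter (· ∈ U) => ψ.1, ?_, ?_⟩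
    · refine Theory.models_sentence_iff.2 fun M => ?_
      simp only [Sentence.Realize, Formula.realize_iInf]
      exact fun ψ => Theory.realize_sentence_of_mem U (Finset.mem_filter.1 ψ.2).2
    · refine Theory.models_sentence_iff.2 fun M => BoundedFormula.realize_imp.2 fun hψ => ?_
      replace hψ := Formula.realize_iInf.1 hψ
      have : M ⊨ (T₀ : L.Theory) := (Theory.model_iff _).2 fun χ hχ =>
        if hU : χ ∈ U then hψ ⟨χ, Finset.mem_filter.2 ⟨hχ, hU⟩⟩
        else Theory.realize_sentence_of_mem W ((hT₀ hχ).resolve_left hU)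
      exact hφ.realize_sentence M
  · rintro ⟨ψ, hψ, himp⟩
    rw [Theory.models_sentence_iff]
    intro M
    have : M ⊨ U := M.is_model.mono Set.subset_union_left
    have : M ⊨ W := M.is_model.mono Set.subset_union_right
    exact BoundedFormula.realize_imp.1 (himp.realize_sentence M) (hψ.realize_sentence M)

end Semantics

section Computability

open Nat.Partrec (Code)

lemma _root_.REPred.exists_of_computable₂ {α : Type*} [Primcodable α] {r : α → ℕ → Bool}
    (hr : Computable₂ r) : REPred fun a => ∃ k, r a k = true :=
  (Partrec.rfind hr.partrec₂).dom_re.of_eq fun a => by simp [Nat.rfind_dom]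

lemma _root_.REPred.exists_computable₂ {p : ℕ → Prop} (hp : REPred p) :
    ∃ r : ℕ → ℕ → Bool, Computable₂ r ∧ ∀ m, p m ↔ ∃ k, r k m = true := by
  obtain ⟨c, hc⟩ := Code.exists_code.1 (Partrec.nat_iff.1 (hp.map (Computable.const 0).to₂))
  refine ⟨fun k m => (Code.evaln k c m).isSome, ?_, fun m => ?_⟩
  · exact (Primrec.option_isSome.comp (Code.primrec_evaln.comp
      ((Primrec.fst.pair (Primrec.const c)).pair Primrec.snd))).to_comp
  · have hdom : p m ↔ (c.eval m).Dom := by simp [hc, Part.assert]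
    simp only [hdom, Part.dom_iff_mem, Code.evaln_complete, Option.isSome_iff_exists]
    exact ⟨fun ⟨x, k, hk⟩ => ⟨k, x, hk⟩, fun ⟨k, x, hk⟩ => ⟨x, k, hk⟩⟩

lemma _root_.REPred.exists_and {α : Type*} [Primcodable α] {p : ℕ → Prop} {q : α → ℕ → Bool}
    (hp : REPred p) (hq : Computable₂ q) : REPred fun a => ∃ m, p m ∧ q a m = true := by
  obtain ⟨r, hr, hpr⟩ := hp.exists_computable₂
  have hs : Computable₂ fun a (j : ℕ) => r j.unpair.1 j.unpair.2 && q a j.unpair.2 :=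
    (Primrec.and.to_comp.comp
      (hr.comp (Computable.fst.comp (Computable.unpair.comp Computable.snd))
        (Computable.snd.comp (Computable.unpair.comp Computable.snd)))
      (hq.comp Computable.fst (Computable.snd.comp (Computable.unpair.comp Computable.snd)))).to₂
  refine (REPred.exists_of_computable₂ hs).of_eq fun a => ?_
  simp only [hpr, Bool.and_eq_true]
  constructor
  · rintro ⟨j, hrj, hqj⟩
    exact ⟨_, ⟨_, hrj⟩, hqj⟩
  · rintro ⟨m, ⟨k, hrk⟩, hqm⟩
    exact ⟨Nat.pair k m, by simp [hrk, hqm]⟩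

end Computability

section Union

open Encodable

variable {L : Language} [∀ n, Encodable (L.Functions n)] [∀ n, Encodable (L.Relations n)]

lemma mem_theoremSet_union_iff {U W : L.Theory} {n : ℕ} :
    n ∈ TheoremSet (U ∪ W) ↔ ∃ m, m ∈ TheoremSet U ∧ impCode L m n ∈ TheoremSet W := by
  constructor
  · rintro ⟨φ, rfl, hφ⟩
    obtain ⟨ψ, hψ, himp⟩ := union_models_iff.1 hφ
    exact ⟨encode ψ, ⟨ψ, rfl, hψ⟩, ψ ⟹ φ, (impCode_encode ψ φ).symm, himp⟩
  · rintro ⟨-, ⟨ψ, rfl, hψ⟩, χ, hχ, himp⟩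
    obtain ⟨φ, rfl, rfl⟩ := exists_eq_imp_of_encode_eq_impCode hχ
    exact ⟨φ, rfl, union_models_iff.2 ⟨ψ, hψ, himp⟩⟩

lemma IsRE.union_of_isDecidableTheory {U W : L.Theory} (hU : IsRE U)
    (hW : IsDecidableTheory W) : IsRE (U ∪ W) := by
  obtain ⟨f, hf, hW⟩ := ComputablePred.computable_iff.1 hW
  have hq : Computable₂ fun n m => f (impCode L m n) :=
    hf.comp ((primrec_impCode L).to_comp.comp Computable.snd Computable.fst)
  refine (REPred.exists_and hU hq).of_eq fun n => ?_
  rw [mem_theoremSet_union_iff]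
  simp only [hW]

end Union

theorem statement_0_general {L : Language} [∀ n, Encodable (L.Functions n)]
    [∀ n, Encodable (L.Relations n)] (U : L.Theory) (_hre : IsRE U) :
    EssHeredUndecidable U ↔
      ∀ W : L.Theory, Consistent (U ∪ W) → ¬ IsDecidableTheory W := by
  constructor
  · intro hU W hcon hdec
    have hW : Extends W (U ∪ W) := extends_of_subset Set.subset_union_right
    exact hU (U ∪ W) (_hre.union_of_isDecidableTheory hdec) hcon
      (extends_of_subset Set.subset_union_left) W hdec.to_re (hcon.of_extends hW) hW hdec
  · intro hU V _ hV hUV W _ _ hWV hdec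
    exact hU W (hV.of_extends (union_extends hUV hWV)) hdec

/-- A consistent r.e. theory `U` is essentially hereditarily undecidable iff
for every set `W` of sentences in the language of `U` such that `U ∪ W` is consistent,
the theory axiomatized by `W` is undecidable. -/
theorem statement_0 {L : Language} [∀ n, Encodable (L.Functions n)]
    [∀ n, Encodable (L.Relations n)] (U : L.Theory) (_hre : IsRE U) (_hcon : Consistent U) :
    EssHeredUndecidable U ↔
      ∀ W : L.Theory, Consistent (U ∪ W) → ¬ IsDecidableTheory W :=
  statement_0_general U _hre

end Formalization
end

section
/- Suppose Φ is a computable function from the natural numbers to the sentences of a consistent RE theory U, and X, Y is a pair of recursively inseparable sets of natural numbers. Suppose Φ maps every element of X to a theorem of U and every element of Y to a sentence refuted by U. Then U is essentially undecidable. -/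
open FirstOrder Language

namespace Formalization

/-- Disjoint sets `X`, `Y` of naturals are recursively inseparable if there is no
computable set containing `X` and disjoint from `Y`. -/
def RecInseparable (X Y : Set ℕ) : Prop :=
  ¬ ∃ C : Set ℕ, ComputablePred (· ∈ C) ∧ X ⊆ C ∧ ∀ y ∈ Y, y ∉ C

theorem ComputablePred.comp {α β : Type*} [Primcodable α] [Primcodable β] {p : β → Prop}
    {f : α → β} (hp : ComputablePred p) (hf : Computable f) : ComputablePred fun a => p (f a) := by
  obtain ⟨g, hg, rfl⟩ := ComputablePred.computable_iff.1 hp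
  exact ComputablePred.computable_iff.2 ⟨g ∘ f, hg.comp hf, rfl⟩

theorem Consistent.not_models_not {L : Language} {T : L.Theory} (hT : Consistent T)
    {φ : L.Sentence} (hφ : T ⊨ᵇ φ) : ¬ T ⊨ᵇ ∼φ :=
  fun hnφ => hT fun M v xs => absurd (hφ M v xs) (hnφ M v xs)

section Separation

variable {L : Language} [∀ n, Encodable (L.Functions n)] [∀ n, Encodable (L.Relations n)]

theorem encode_mem_theoremSet {T : L.Theory} {φ : L.Sentence} :
    Encodable.encode φ ∈ TheoremSet T ↔ T ⊨ᵇ φ :=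
  ⟨fun ⟨_, hψ, hT⟩ => Encodable.encode_injective hψ ▸ hT, fun h => ⟨φ, rfl, h⟩⟩

/-- For decidable `T`, the indices `n` with `T ⊨ᵇ Φ n` would be a computable separator of
`X` and `Y`. -/
theorem Consistent.not_isDecidableTheory_of_separates {T : L.Theory} (hT : Consistent T)
    {Φ : ℕ → L.Sentence} (hΦ : ∃ f : ℕ → ℕ, Computable f ∧ ∀ n, f n = Encodable.encode (Φ n))
    {X Y : Set ℕ} (hinsep : RecInseparable X Y)
    (hX : ∀ n ∈ X, T ⊨ᵇ Φ n) (hY : ∀ n ∈ Y, T ⊨ᵇ ∼(Φ n)) : ¬ IsDecidableTheory T := by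
  intro hdec
  obtain ⟨f, hf, hfΦ⟩ := hΦ
  have hdecΦ : ComputablePred fun n => f n ∈ TheoremSet T := ComputablePred.comp hdec hf
  have hmem (n : ℕ) : f n ∈ TheoremSet T ↔ T ⊨ᵇ Φ n := hfΦ n ▸ encode_mem_theoremSet
  refine hinsep ⟨{n | f n ∈ TheoremSet T}, hdecΦ, fun n hn => (hmem n).2 (hX n hn), ?_⟩
  exact fun n hn hΦn => hT.not_models_not ((hmem n).1 hΦn) (hY n hn)

end Separation

theorem statement_8_general {L : Language} [∀ n, Encodable (L.Functions n)]
    [∀ n, Encodable (L.Relations n)] (U : L.Theory)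
    (Φ : ℕ → L.Sentence)
    (hΦ : ∃ f : ℕ → ℕ, Computable f ∧ ∀ n, f n = Encodable.encode (Φ n))
    (X Y : Set ℕ) (hinsep : RecInseparable X Y)
    (hX : ∀ n ∈ X, U ⊨ᵇ Φ n) (hY : ∀ n ∈ Y, U ⊨ᵇ ∼(Φ n)) :
    EssUndecidable U :=
  fun _ _ hWcon hext => hWcon.not_isDecidableTheory_of_separates hΦ hinsep
    (fun n hn => hext _ (hX n hn)) (fun n hn => hext _ (hY n hn))

/-- if a computable `Φ` maps a pair of recursively inseparable sets into
the theorems, respectively the refutable sentences, of a consistent r.e. theory `U`,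
then `U` is essentially undecidable. -/
theorem statement_8 {L : Language} [∀ n, Encodable (L.Functions n)]
    [∀ n, Encodable (L.Relations n)] (U : L.Theory) (hre : IsRE U) (hcon : Consistent U)
    (Φ : ℕ → L.Sentence)
    (hΦ : ∃ f : ℕ → ℕ, Computable f ∧ ∀ n, f n = Encodable.encode (Φ n))
    (X Y : Set ℕ) (hdisj : Disjoint X Y) (hinsep : RecInseparable X Y)
    (hX : ∀ n ∈ X, U ⊨ᵇ Φ n) (hY : ∀ n ∈ Y, U ⊨ᵇ ∼(Φ n)) :
    EssUndecidable U :=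
  statement_8_general U Φ hΦ X Y hinsep hX hY

end Formalization
end

section
/- Suppose Z ⊆ ℕ is an RE set such that for every m there is an n with ⟨n,m⟩ ∈ Z. Then the sets Km₀ ∩ Z and Km₁ ∩ Z are effectively inseparable. -/
namespace Formalization

/-- Kleene application: apply the partial recursive function with code `x` to `y`. -/
def kleene (x y : ℕ) : Part ℕ :=
  (Denumerable.ofNat Nat.Partrec.Code x).eval y

/-- `Km i` is the set of pairs `⟨n, x⟩` such that `x · ⟨n, x⟩` converges with value
`i`. -/
def Km (i : ℕ) : Set ℕ :=
  {p | i ∈ kleene (Nat.unpair p).2 p}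

/-- `WSet i` is the r.e. subset of `ℕ` with index `i` (the domain of the partial
recursive function with code `i`). -/
def WSet (i : ℕ) : Set ℕ :=
  {n | ((Denumerable.ofNat Nat.Partrec.Code i).eval n).Dom}

/-- Disjoint sets `A`, `B` are effectively inseparable if there is a partial recursive
`Ψ` such that whenever `A ⊆ W_i`, `B ⊆ W_j` and `W_i ∩ W_j = ∅`, then `Ψ⟨i,j⟩`
converges to a value outside `W_i ∪ W_j`. -/
def EffInseparable (A B : Set ℕ) : Prop :=
  ∃ Ψ : ℕ →. ℕ, Partrec Ψ ∧
    ∀ i j : ℕ, A ⊆ WSet i → B ⊆ WSet j → WSet i ∩ WSet j = ∅ →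
      ∃ h : (Ψ (Nat.pair i j)).Dom, (Ψ (Nat.pair i j)).get h ∉ WSet i ∪ WSet j

/-!
Given indices `i, j`, let `r` race the enumerations of `W_i` and `W_j` on an input `x`, answering
`0` if `x` appears in `W_j` first and `1` if it appears in `W_i` first. By s-m-n there is a
computable `e` with `e ⟨i, j⟩ · x = r (⟨i, j⟩, x)`, and `Ψ ⟨i, j⟩` searches `Z` for a point
`x = ⟨n, e ⟨i, j⟩⟩`; for such `x`, `x ∈ Km_v` says exactly that the race on `x` answers `v`.
If `x` were in `W_i ∪ W_j` the race would halt: the answer `0` puts `x` into `Km₀ ∩ Z ⊆ W_i`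
while `x ∈ W_j`, the answer `1` puts `x` into `Km₁ ∩ Z ⊆ W_j` while `x ∈ W_i`.
-/

open Nat.Partrec (Code)
open Nat.Partrec.Code

theorem kleene_smn {f : ℕ → ℕ →. ℕ} (hf : Partrec₂ f) :
    ∃ e : ℕ → ℕ, Computable e ∧ ∀ m x, kleene (e m) x = f m x := by
  obtain ⟨c, hc⟩ := exists_code.1 <| Partrec.nat_iff.1 <|
    hf.comp (Computable.fst.comp Computable.unpair) (Computable.snd.comp Computable.unpair)
  refine ⟨fun m => Encodable.encode (curry c m),
    Computable.encode.comp (primrec₂_curry.to_comp.comp (Computable.const c) Computable.id), ?_⟩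
  intro m x
  simp [kleene, eval_curry, hc]

theorem exists_code_dom_iff {Z : Set ℕ} (hZ : REPred (· ∈ Z)) :
    ∃ c : Code, ∀ n, (eval c n).Dom ↔ n ∈ Z := by
  obtain ⟨c, hc⟩ := exists_code.1 (Partrec.nat_iff.1 (hZ.map (Computable.const 0).to₂))
  exact ⟨c, fun n => by simp [hc, Part.assert]⟩

theorem exists_partrec_search_pair_mem {Z : Set ℕ} (hZ : REPred (· ∈ Z)) :
    ∃ w : ℕ →. ℕ, Partrec w ∧
      ∀ m, ((∃ n, Nat.pair n m ∈ Z) → (w m).Dom) ∧ ∀ p ∈ w m, p ∈ Z ∧ p.unpair.2 = m := by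
  obtain ⟨c, hc⟩ := exists_code_dom_iff hZ
  let f : ℕ → ℕ → Option ℕ := fun m s =>
    (evaln s.unpair.1 c (Nat.pair s.unpair.2 m)).map fun _ => Nat.pair s.unpair.2 m
  have hpair : Primrec₂ fun m s : ℕ => Nat.pair s.unpair.2 m :=
    Primrec₂.natPair.comp (Primrec.snd.comp (Primrec.unpair.comp Primrec.snd)) Primrec.fst
  have hf : Computable₂ f := Primrec₂.to_comp <| Primrec.option_map
    (primrec_evaln.comp (((Primrec.fst.comp (Primrec.unpair.comp Primrec.snd)).pair
      (Primrec.const c)).pair hpair))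
    (hpair.comp (Primrec.fst.comp Primrec.fst) (Primrec.snd.comp Primrec.fst)).to₂
  refine ⟨fun m => Nat.rfindOpt (f m), Partrec.rfindOpt hf, fun m => ⟨?_, ?_⟩⟩
  · rintro ⟨n, hn⟩
    obtain ⟨x, hx⟩ := Part.dom_iff_mem.1 ((hc _).2 hn)
    obtain ⟨k, hk⟩ := evaln_complete.1 hx
    refine Nat.rfindOpt_dom.2 ⟨Nat.pair k n, Nat.pair n m, ?_⟩
    simpa [f] using ⟨x, hk⟩
  · intro p hp
    obtain ⟨s, hs⟩ := Nat.rfindOpt_spec hp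
    simp only [f, Option.mem_def, Option.map_eq_some_iff] at hs
    obtain ⟨x, hx, rfl⟩ := hs
    exact ⟨(hc _).1 (Part.dom_iff_mem.2 ⟨x, evaln_sound hx⟩), Nat.unpair_pair _ _ ▸ rfl⟩

theorem exists_partrec₂_wSet_race : ∃ r : ℕ → ℕ →. ℕ, Partrec₂ r ∧ ∀ i j x,
    ((r (Nat.pair i j) x).Dom ↔ x ∈ WSet i ∨ x ∈ WSet j) ∧
      ∀ v ∈ r (Nat.pair i j) x, (v = 0 ∧ x ∈ WSet j) ∨ (v = 1 ∧ x ∈ WSet i) := by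
  have hW (v : ℕ) (side : ℕ → ℕ) (hside : Computable side) :
      Partrec₂ fun m x : ℕ => (eval (Denumerable.ofNat Code (side m)) x).map fun _ => v :=
    (eval_part.comp ((Computable.ofNat Code).comp (hside.comp Computable.fst)) Computable.snd).map
      (Computable.const v).to₂
  obtain ⟨r, hr, hrace⟩ := Partrec.merge'
    (hW 0 _ (Computable.snd.comp Computable.unpair))
    (hW 1 _ (Computable.fst.comp Computable.unpair))
  refine ⟨fun m x => r (m, x), hr, fun i j x => ⟨?_, fun v hv => ?_⟩⟩
  · simpa [WSet, or_comm] using (hrace (Nat.pair i j, x)).2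
  · rcases (hrace (Nat.pair i j, x)).1 v hv with h | h <;>
      obtain ⟨y, hy, rfl⟩ := (Part.mem_map_iff _).1 h <;> simp only [Nat.unpair_pair] at hy
    · exact Or.inl ⟨rfl, Part.dom_iff_mem.2 ⟨y, hy⟩⟩
    · exact Or.inr ⟨rfl, Part.dom_iff_mem.2 ⟨y, hy⟩⟩

/-- if `Z` is an r.e. set such that for every `m` there is an `n` with
`⟨n, m⟩ ∈ Z`, then `Km₀ ∩ Z` and `Km₁ ∩ Z` are effectively inseparable. -/
theorem statement_18 (Z : Set ℕ) (hre : REPred (· ∈ Z))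
    (hZ : ∀ m : ℕ, ∃ n : ℕ, Nat.pair n m ∈ Z) :
    EffInseparable (Km 0 ∩ Z) (Km 1 ∩ Z) := by
  obtain ⟨w, hw, hwitness⟩ := exists_partrec_search_pair_mem hre
  obtain ⟨r, hr, hrace⟩ := exists_partrec₂_wSet_race
  obtain ⟨e, he, hkleene⟩ := kleene_smn hr
  refine ⟨fun m => w (e m), hw.comp he, fun i j hA hB hdisj => ?_⟩
  have hdom := (hwitness _).1 (hZ (e (Nat.pair i j)))
  refine ⟨hdom, fun hmem => ?_⟩
  set x := (w (e (Nat.pair i j))).get hdom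
  obtain ⟨hxZ, hx⟩ := (hwitness _).2 x (Part.get_mem hdom)
  have hval : kleene x.unpair.2 x = r (Nat.pair i j) x := by rw [hx, hkleene]
  obtain ⟨v, hv⟩ := Part.dom_iff_mem.1 ((hrace i j x).1.2 hmem)
  rcases (hrace i j x).2 v hv with ⟨rfl, hxj⟩ | ⟨rfl, hxi⟩
  · exact hdisj.subset ⟨hA ⟨show 0 ∈ kleene _ x from hval ▸ hv, hxZ⟩, hxj⟩
  · exact hdisj.subset ⟨hxi, hB ⟨show 1 ∈ kleene _ x from hval ▸ hv, hxZ⟩⟩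

end Formalization
end
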